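/- Let α : ℝ≥0 → ℝ≥0 be positive definite with α(r) < r for all r > 0, and let ρ₁ be a locally Lipschitz class-K∞ function and ρ₂ a class-L function such that α(r) ≥ ρ₁(r)·ρ₂(r) for all r ≥ 0. Let β(r,τ) denote the maximal solution of the scalar ODE dy/dτ = −ρ₁(y) with y(0) = r, so β(r,0) = r. Then for every sequence w : {j₀, j₀+1, …} → ℝ≥0 satisfying w(j+1) − w(j) ≤ −α(w(j)) for all j ≥ j₀ (with j₀ ≥ 0), one has w(j) ≤ β(w(j₀), ρ₂(w(j₀))·(j − j₀)) for all j ≥ j₀. -/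

import Mathlib

def PosDefFun (f : ℝ → ℝ) : Prop :=
  ContinuousOn f (Set.Ici 0) ∧ f 0 = 0 ∧ ∀ s > 0, 0 < f s

def ClassK (f : ℝ → ℝ) : Prop :=
  PosDefFun f ∧ StrictMonoOn f (Set.Ici 0)

def ClassKInf (f : ℝ → ℝ) : Prop :=
  ClassK f ∧ Filter.Tendsto f Filter.atTop Filter.atTop

def ClassL (f : ℝ → ℝ) : Prop :=
  ContinuousOn f (Set.Ici 0) ∧ AntitoneOn f (Set.Ici 0) ∧
    (∀ s ≥ 0, 0 ≤ f s) ∧ Filter.Tendsto f Filter.atTop (nhds 0)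

/-!
Let `y = β (w j₀)`. A line `s ↦ x - s ρ₁(x)` that starts below `y τ` stays below `y (τ + s)`:
wherever the line is above `y`, we have `y < x`, so by monotonicity of `ρ₁` the solution decreases
more slowly than the line there. Since `α ≥ ρ₁ ρ₂ ≥ 0`, the sequence is nonincreasing, so the
antitone `ρ₂` gives `w (j + 1) ≤ w j - c ρ₁ (w j)` with the frozen rate `c = ρ₂ (w j₀)`; hence one
step of the sequence is dominated by the flow of `y` over time `c`, and induction gives the claim.
Monotonicity of `ρ₁` is only available on `[0, ∞)`, so we need `y ≥ 0`: this holds because `0` is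
an equilibrium and solutions of `y' = -ρ₁ y` are unique when `ρ₁` is locally Lipschitz.
-/

open Set

theorem PosDefFun.nonneg {f : ℝ → ℝ} (hf : PosDefFun f) : ∀ s ≥ 0, 0 ≤ f s := by
  intro s hs
  rcases hs.eq_or_lt with rfl | hs
  · exact hf.2.1.ge
  · exact (hf.2.2 s hs).le

theorem image_le_of_hasDerivAt_le_of_lt {f f' B B' : ℝ → ℝ} {a b : ℝ}
    (hf : ContinuousOn f (Icc a b)) (hf' : ∀ x ∈ Ioo a b, HasDerivAt f (f' x) x)
    (hB : ContinuousOn B (Icc a b)) (hB' : ∀ x ∈ Ioo a b, HasDerivAt B (B' x) x)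
    (ha : f a ≤ B a) (bound : ∀ x ∈ Ioo a b, B x < f x → f' x ≤ B' x) :
    ∀ x ∈ Icc a b, f x ≤ B x := by
  intro b₁ hb₁
  by_contra! hlt
  have hsub : Icc a b₁ ⊆ Icc a b := Icc_subset_Icc_right hb₁.2
  have hS : IsCompact {x ∈ Icc a b₁ | f x ≤ B x} :=
    isCompact_Icc.of_isClosed_subset
      (isClosed_Icc.isClosed_le (hf.mono hsub) (hB.mono hsub)) (sep_subset _ _)
  -- `t₀` is the last point of `[a, b₁]` with `f ≤ B`; after it `B - f` is nondecreasing.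
  obtain ⟨t₀, ⟨ht₀, ht₀le⟩, ht₀max⟩ := hS.exists_isGreatest ⟨a, ⟨le_rfl, hb₁.1⟩, ha⟩
  have hlt_of_gt : ∀ x ∈ Ioc t₀ b₁, B x < f x := fun x hx ↦
    not_le.1 fun hle ↦ hx.1.not_ge (ht₀max ⟨⟨ht₀.1.trans hx.1.le, hx.2⟩, hle⟩)
  have ht₀b₁ : t₀ < b₁ := ht₀.2.lt_of_ne (by rintro rfl; exact hlt.not_ge ht₀le)
  have hIoo : ∀ x ∈ Ioo t₀ b₁, x ∈ Ioo a b := fun x hx ↦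
    ⟨ht₀.1.trans_lt hx.1, hx.2.trans_le hb₁.2⟩
  have hmono : MonotoneOn (fun x ↦ B x - f x) (Icc t₀ b₁) := by
    refine monotoneOn_of_hasDerivWithinAt_nonneg (f' := fun x ↦ B' x - f' x) (convex_Icc _ _)
      ((hB.sub hf).mono ((Icc_subset_Icc_left ht₀.1).trans hsub)) (fun x hx ↦ ?_)
      (fun x hx ↦ ?_) <;> rw [interior_Icc] at hx
    · exact ((hB' x (hIoo x hx)).sub (hf' x (hIoo x hx))).hasDerivWithinAt
    · exact sub_nonneg.2 (bound x (hIoo x hx) (hlt_of_gt x ⟨hx.1, hx.2.le⟩))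
  have := hmono (left_mem_Icc.2 ht₀b₁.le) (right_mem_Icc.2 ht₀b₁.le) ht₀b₁.le
  dsimp only at this
  linarith

theorem nonneg_of_hasDerivWithinAt_of_map_zero {v g : ℝ → ℝ} (hv : LocallyLipschitz v)
    (hv0 : v 0 = 0) (hg : ∀ t ≥ 0, HasDerivWithinAt g (v (g t)) (Ici 0) t) (hg0 : 0 ≤ g 0) :
    ∀ t ≥ 0, 0 ≤ g t := by
  intro t₁ ht₁
  by_contra! hneg
  have hcont : ContinuousOn g (Ici 0) := fun t ht ↦ (hg t ht).continuousWithinAt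
  obtain ⟨t₀, ht₀, hgt₀⟩ :=
    intermediate_value_Icc' ht₁ (hcont.mono Icc_subset_Ici_self) ⟨hneg.le, hg0⟩
  have hIcc : Icc t₀ t₁ ⊆ Ici 0 := fun t ht ↦ ht₀.1.trans ht.1
  have hIco : ∀ t ∈ Ico t₀ t₁, t ∈ Icc t₀ t₁ := fun _ ht ↦ Ico_subset_Icc_self ht
  obtain ⟨K, hK⟩ := (hv.locallyLipschitzOn (s := g '' Icc t₀ t₁)).exists_lipschitzOnWith_of_compact
    (isCompact_Icc.image_of_continuousOn (hcont.mono hIcc))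
  have hzero : EqOn g (fun _ ↦ 0) (Icc t₀ t₁) :=
    ODE_solution_unique_of_mem_Icc_right (v := fun _ ↦ v) (s := fun _ ↦ g '' Icc t₀ t₁)
      (fun _ _ ↦ hK) (hcont.mono hIcc)
      (fun t ht ↦ (hg t (hIcc (hIco t ht))).mono (Ici_subset_Ici.2 (hIcc (hIco t ht))))
      (fun t ht ↦ mem_image_of_mem g (hIco t ht)) continuousOn_const
      (fun t _ ↦ by simpa [hv0] using hasDerivWithinAt_const t (Ici t) (0 : ℝ))
      (fun _ _ ↦ ⟨t₀, left_mem_Icc.2 ht₀.2, hgt₀⟩) hgt₀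
  exact hneg.ne (hzero (right_mem_Icc.2 ht₀.2))

theorem sub_mul_le_of_hasDerivWithinAt_neg {ρ y : ℝ → ℝ} (hρ : ClassK ρ)
    (hy : ∀ τ ≥ 0, HasDerivWithinAt y (-ρ (y τ)) (Ici 0) τ) (hy_nonneg : ∀ τ ≥ 0, 0 ≤ y τ)
    {τ c x : ℝ} (hτ : 0 ≤ τ) (hc : 0 ≤ c) (hx : 0 ≤ x) (hxy : x ≤ y τ) :
    x - c * ρ x ≤ y (τ + c) := by
  have hshift : ∀ s ∈ Icc 0 c, 0 ≤ τ + s := fun s hs ↦ add_nonneg hτ hs.1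
  have hy_cont : ContinuousOn (fun s ↦ y (τ + s)) (Icc 0 c) :=
    ContinuousOn.comp (fun t ht ↦ (hy t ht).continuousWithinAt) (by fun_prop) hshift
  refine image_le_of_hasDerivAt_le_of_lt (f := fun s ↦ x - s * ρ x) (f' := fun _ ↦ -ρ x)
    (B' := fun s ↦ -ρ (y (τ + s))) (by fun_prop)
    (fun s _ ↦ by simpa using ((hasDerivAt_id s).mul_const (ρ x)).const_sub x) hy_cont
    (fun s hs ↦ ?_) (by simpa using hxy) (fun s hs hlt ↦ ?_) c (right_mem_Icc.2 hc)
  · have hpos : 0 < τ + s := add_pos_of_nonneg_of_pos hτ hs.1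
    exact ((hy _ hpos.le).hasDerivAt (Ici_mem_nhds hpos)).comp_const_add τ s
  · have hle : y (τ + s) ≤ x :=
      hlt.le.trans (sub_le_self _ (mul_nonneg hs.1.le (hρ.1.nonneg x hx)))
    exact neg_le_neg (hρ.2.monotoneOn (hy_nonneg _ (hshift s (Ioo_subset_Icc_self hs))) hx hle)

theorem le_of_hasDerivWithinAt_neg_of_succ_le {ρ y : ℝ → ℝ} (hρ : ClassK ρ)
    (hy : ∀ τ ≥ 0, HasDerivWithinAt y (-ρ (y τ)) (Ici 0) τ) (hy_nonneg : ∀ τ ≥ 0, 0 ≤ y τ)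
    {c : ℝ} (hc : 0 ≤ c) {w : ℕ → ℝ} {j₀ : ℕ} (hw_nonneg : ∀ j ≥ j₀, 0 ≤ w j)
    (hw : ∀ j ≥ j₀, w (j + 1) ≤ w j - c * ρ (w j)) (h₀ : w j₀ ≤ y 0) :
    ∀ j ≥ j₀, w j ≤ y (c * ((j : ℝ) - j₀)) := by
  refine Nat.le_induction (by simpa using h₀) fun j hj ih ↦ ?_
  have hτ : 0 ≤ c * ((j : ℝ) - j₀) := mul_nonneg hc (sub_nonneg.2 (Nat.cast_le.2 hj))
  calc w (j + 1) ≤ w j - c * ρ (w j) := hw j hj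
    _ ≤ y (c * ((j : ℝ) - j₀) + c) :=
      sub_mul_le_of_hasDerivWithinAt_neg hρ hy hy_nonneg hτ hc (hw_nonneg j hj) ih
    _ = y (c * (((j + 1 : ℕ) : ℝ) - j₀)) := by push_cast; ring_nf

theorem comparison_jump_general (α ρ₁ ρ₂ : ℝ → ℝ) (β : ℝ → ℝ → ℝ)
    (hρ₁ : ClassKInf ρ₁) (hρ₁lip : LocallyLipschitz ρ₁) (hρ₂ : ClassL ρ₂)
    (hdom : ∀ r ≥ 0, ρ₁ r * ρ₂ r ≤ α r)
    (hβ0 : ∀ r ≥ 0, β r 0 = r)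
    (hβode : ∀ r ≥ 0, ∀ τ ≥ 0,
      HasDerivWithinAt (β r) (-(ρ₁ (β r τ))) (Set.Ici 0) τ)
    (j₀ : ℕ) (w : ℕ → ℝ)
    (hwnn : ∀ j ≥ j₀, 0 ≤ w j)
    (hdec : ∀ j ≥ j₀, w (j + 1) - w j ≤ -(α (w j))) :
    ∀ j ≥ j₀, w j ≤ β (w j₀) (ρ₂ (w j₀) * ((j : ℝ) - (j₀ : ℝ))) := by
  obtain ⟨hρ₁K, -⟩ := hρ₁
  obtain ⟨-, hρ₂anti, hρ₂nn, -⟩ := hρ₂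
  have hr : 0 ≤ w j₀ := hwnn j₀ le_rfl
  have hρ₁nn : ∀ j ≥ j₀, 0 ≤ ρ₁ (w j) := fun j hj ↦ hρ₁K.1.nonneg _ (hwnn j hj)
  have hw_le : ∀ j ≥ j₀, w j ≤ w j₀ := Nat.le_induction le_rfl fun j hj _ ↦ by
    nlinarith [hdec j hj, hdom _ (hwnn j hj), hρ₁nn j hj, hρ₂nn _ (hwnn j hj)]
  have hstep : ∀ j ≥ j₀, w (j + 1) ≤ w j - ρ₂ (w j₀) * ρ₁ (w j) := fun j hj ↦ by
    have hρ₂le : ρ₂ (w j₀) ≤ ρ₂ (w j) := hρ₂anti (hwnn j hj) hr (hw_le j hj)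
    nlinarith [hdec j hj, hdom _ (hwnn j hj), hρ₁nn j hj]
  have hβnn : ∀ τ ≥ 0, 0 ≤ β (w j₀) τ :=
    nonneg_of_hasDerivWithinAt_of_map_zero hρ₁lip.neg (by simp [hρ₁K.1.2.1]) (hβode _ hr)
      (hr.trans (hβ0 _ hr).ge)
  exact le_of_hasDerivWithinAt_neg_of_succ_le hρ₁K (hβode _ hr) hβnn (hρ₂nn _ hr) hwnn hstep
    (hβ0 _ hr).ge

/-- Discrete comparison lemma (Lemma `L:9` of the paper): if `α` is positive definite with
`α r < r` for `r > 0` and `α ≥ ρ₁ · ρ₂` for a locally Lipschitz class-K∞ function `ρ₁` and a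
class-L function `ρ₂`, and `β (r, ·)` is the (maximal) solution of `dy/dτ = -ρ₁ (y)` with
`β r 0 = r`, then any nonnegative sequence `w` with `w (j+1) - w j ≤ -α (w j)` for `j ≥ j₀`
satisfies `w j ≤ β (w j₀) (ρ₂ (w j₀) * (j - j₀))` for all `j ≥ j₀`. -/
theorem comparison_jump (α ρ₁ ρ₂ : ℝ → ℝ) (β : ℝ → ℝ → ℝ)
    (hα : PosDefFun α) (hαlt : ∀ r > 0, α r < r)
    (hρ₁ : ClassKInf ρ₁) (hρ₁lip : LocallyLipschitz ρ₁) (hρ₂ : ClassL ρ₂)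
    (hdom : ∀ r ≥ 0, ρ₁ r * ρ₂ r ≤ α r)
    (hβ0 : ∀ r ≥ 0, β r 0 = r)
    (hβode : ∀ r ≥ 0, ∀ τ ≥ 0,
      HasDerivWithinAt (β r) (-(ρ₁ (β r τ))) (Set.Ici 0) τ)
    (j₀ : ℕ) (w : ℕ → ℝ)
    (hwnn : ∀ j ≥ j₀, 0 ≤ w j)
    (hdec : ∀ j ≥ j₀, w (j + 1) - w j ≤ -(α (w j))) :
    ∀ j ≥ j₀, w j ≤ β (w j₀) (ρ₂ (w j₀) * ((j : ℝ) - (j₀ : ℝ))) :=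
  comparison_jump_general α ρ₁ ρ₂ β hρ₁ hρ₁lip hρ₂ hdom hβ0 hβode j₀ w hwnn hdec
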